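/- arXiv:2008.02550 — 2 statements merged into one kernel-verified Lean document; each statement's English description precedes it below -/
import Mathlib

section
/- In any abstract argumentation framework, if S is admissible (conflict-free and S ⊆ Acc(S)), then there exists a complete extension E with S ⊆ E (namely, the least fixpoint of Acc above S). -/
/-! Dung's argument: by Zorn's lemma (a conflict involves only two arguments, so unions of chains of
admissible sets are admissible) `S` lies in a maximal admissible set `P`. Since `Acc P` is again
admissible and contains `P`, maximality forces `P = Acc P`. -/

variable {α : Type*}

/-- Defeated arguments w.r.t. S: attacked by some member of S. -/
def defSet (Ω : α → α → Prop) (S : Set α) : Set α := {a | ∃ b ∈ S, Ω b a}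

/-- Acceptable arguments w.r.t. S: all attackers are defeated by S. -/
def accSet (Ω : α → α → Prop) (S : Set α) : Set α := {a | ∀ b, Ω b a → b ∈ defSet Ω S}

def ConflictFree (Ω : α → α → Prop) (S : Set α) : Prop := S ∩ defSet Ω S = ∅

def CompleteExt (Ω : α → α → Prop) (S : Set α) : Prop :=
  ConflictFree Ω S ∧ S = accSet Ω S

def PreferredExt (Ω : α → α → Prop) (S : Set α) : Prop :=
  CompleteExt Ω S ∧ ∀ T, CompleteExt Ω T → S ⊆ T → S = T

def StableExt (Ω : α → α → Prop) (S : Set α) : Prop :=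
  PreferredExt Ω S ∧ S ∪ defSet Ω S = Set.univ

def Admissible (Ω : α → α → Prop) (S : Set α) : Prop :=
  ConflictFree Ω S ∧ S ⊆ accSet Ω S

lemma conflictFree_iff {Ω : α → α → Prop} {S : Set α} :
    ConflictFree Ω S ↔ ∀ a ∈ S, ∀ b ∈ S, ¬ Ω b a := by
  simp [ConflictFree, defSet, Set.eq_empty_iff_forall_notMem]

lemma defSet_mono (Ω : α → α → Prop) {S T : Set α} (h : S ⊆ T) :
    defSet Ω S ⊆ defSet Ω T := by
  rintro a ⟨b, hb, hΩ⟩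
  exact ⟨b, h hb, hΩ⟩

lemma accSet_mono (Ω : α → α → Prop) {S T : Set α} (h : S ⊆ T) :
    accSet Ω S ⊆ accSet Ω T :=
  fun _ ha b hΩ => defSet_mono Ω h (ha b hΩ)

namespace Admissible

variable {Ω : α → α → Prop} {S : Set α}

lemma accSet (h : Admissible Ω S) : Admissible Ω (accSet Ω S) := by
  refine ⟨conflictFree_iff.2 fun a ha b hb hba => ?_, accSet_mono Ω h.2⟩
  obtain ⟨c, hc, hcb⟩ := ha b hba
  obtain ⟨d, hd, hdc⟩ := hb c hcb
  exact conflictFree_iff.1 h.1 c hc d hd hdc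

lemma sUnion_of_isChain {c : Set (Set α)} (hc : IsChain (· ⊆ ·) c)
    (hadm : ∀ s ∈ c, Admissible Ω s) : Admissible Ω (⋃₀ c) := by
  refine ⟨conflictFree_iff.2 ?_, ?_⟩
  · rintro a ⟨s, hs, has⟩ b ⟨t, ht, hbt⟩
    rcases hc.total hs ht with hst | hts
    · exact conflictFree_iff.1 (hadm t ht).1 a (hst has) b hbt
    · exact conflictFree_iff.1 (hadm s hs).1 a has b (hts hbt)
  · rintro a ⟨s, hs, has⟩
    exact accSet_mono Ω (Set.subset_sUnion_of_mem hs) ((hadm s hs).2 has)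

lemma exists_maximal_superset (h : Admissible Ω S) :
    ∃ P, S ⊆ P ∧ Maximal (Admissible Ω) P :=
  zorn_subset_nonempty {P | Admissible Ω P}
    (fun c hcA hc _ => ⟨⋃₀ c, sUnion_of_isChain hc hcA, fun _ => Set.subset_sUnion_of_mem⟩) S h

end Admissible

lemma Maximal.completeExt {Ω : α → α → Prop} {P : Set α} (h : Maximal (Admissible Ω) P) :
    CompleteExt Ω P :=
  ⟨h.prop.1, h.eq_of_subset h.prop.accSet h.prop.2⟩

theorem admissible_subset_complete_general (Ω : α → α → Prop) (S : Set α)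
    (hcf : ConflictFree Ω S) (hadm : S ⊆ accSet Ω S) :
    ∃ E, CompleteExt Ω E ∧ S ⊆ E := by
  obtain ⟨P, hSP, hP⟩ := Admissible.exists_maximal_superset ⟨hcf, hadm⟩
  exact ⟨P, hP.completeExt, hSP⟩

/-- Every admissible set is contained in some complete extension. -/
theorem admissible_subset_complete [Finite α] (Ω : α → α → Prop) (S : Set α)
    (hcf : ConflictFree Ω S) (hadm : S ⊆ accSet Ω S) :
    ∃ E, CompleteExt Ω E ∧ S ⊆ E :=
  admissible_subset_complete_general Ω S hcf hadm
end

section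
/- In an ASAF, for any set S ⊆ A ∪ Σ ∪ Π, if α ∈ Σ ∩ S extendedly defeats X given S and t(α) is defeated (t(α) ∈ Def(S)), then every argument on the support path witnessing the extended defeat from t(α) to X (or to s(X)) is in Def(S), assuming Def is closed under the ASAF defeat rules. -/
/- An ASAF has arguments `A`, attack names `B` and support names `C`; its elements
are `Sum.inl a`, `Sum.inr (Sum.inl α)` and `Sum.inr (Sum.inr β)`. -/
variable {A B C : Type*}

/-- The source of an element (defined for attacks and supports only). -/
def srcOf (sB : B → A) (sC : C → A) : A ⊕ B ⊕ C → Option A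
  | Sum.inl _ => none
  | Sum.inr (Sum.inl α) => some (sB α)
  | Sum.inr (Sum.inr β) => some (sC β)

/-- α def X: t(α) = X or t(α) = s(X). -/
def asafAtt (sB : B → A) (tB : B → A ⊕ B ⊕ C) (sC : C → A)
    (α : B) (X : A ⊕ B ⊕ C) : Prop :=
  tB α = X ∨ ∃ b : A, srcOf sB sC X = some b ∧ tB α = Sum.inl b

/-- The edge relation (Π ∩ S)*: pairs (s(β), t(β)) for supports β ∈ S. -/
def piStar (sC : C → A) (tC : C → A ⊕ B ⊕ C) (S : Set (A ⊕ B ⊕ C))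
    (x y : A ⊕ B ⊕ C) : Prop :=
  ∃ β : C, Sum.inr (Sum.inr β) ∈ S ∧ x = Sum.inl (sC β) ∧ y = tC β

/-- α def_S X: α def X, or t(α) = b ∈ A and (b,X) ∈ (Π∩S)⁺ or (b,s(X)) ∈ (Π∩S)⁺. -/
def asafDefeats (sB : B → A) (tB : B → A ⊕ B ⊕ C) (sC : C → A)
    (tC : C → A ⊕ B ⊕ C) (S : Set (A ⊕ B ⊕ C)) (α : B) (X : A ⊕ B ⊕ C) : Prop :=
  asafAtt sB tB sC α X ∨
    ∃ b : A, tB α = Sum.inl b ∧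
      (Relation.TransGen (piStar sC tC S) (Sum.inl b) X ∨
        ∃ c : A, srcOf sB sC X = some c ∧
          Relation.TransGen (piStar sC tC S) (Sum.inl b) (Sum.inl c))

/-- ASAF-defeated set. -/
def asafDef (sB : B → A) (tB : B → A ⊕ B ⊕ C) (sC : C → A) (tC : C → A ⊕ B ⊕ C)
    (S : Set (A ⊕ B ⊕ C)) : Set (A ⊕ B ⊕ C) :=
  {X | ∃ α : B, Sum.inr (Sum.inl α) ∈ S ∧ asafDefeats sB tB sC tC S α X}

/-- ASAF-acceptable set. -/
def asafAcc (sB : B → A) (tB : B → A ⊕ B ⊕ C) (sC : C → A) (tC : C → A ⊕ B ⊕ C)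
    (S : Set (A ⊕ B ⊕ C)) : Set (A ⊕ B ⊕ C) :=
  {X | ∀ α : B, asafDefeats sB tB sC tC S α X →
    Sum.inr (Sum.inl α) ∈ asafDef sB tB sC tC S}

/-- Acyclicity of the support graph Π*. -/
def piAcyclic (sC : C → A) (tC : C → A ⊕ B ⊕ C) : Prop :=
  ∀ x : A ⊕ B ⊕ C,
    ¬ Relation.TransGen (fun x y => ∃ β : C, x = Sum.inl (sC β) ∧ y = tC β) x x

section

variable {sB : B → A} {tB : B → A ⊕ B ⊕ C} {sC : C → A} {tC : C → A ⊕ B ⊕ C}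
  {S : Set (A ⊕ B ⊕ C)} {α : B}

theorem asafDefeats_inl_iff {b : A} :
    asafDefeats sB tB sC tC S α (Sum.inl b) ↔
      ∃ a : A, tB α = Sum.inl a ∧
        Relation.ReflTransGen (piStar sC tC S) (Sum.inl a) (Sum.inl b) := by
  simp only [asafDefeats, asafAtt, srcOf, reduceCtorEq, false_and, exists_false, or_false,
    Relation.reflTransGen_iff_eq_or_transGen, Sum.inl.injEq]
  constructor
  · rintro (h | ⟨a, ha, hab⟩)
    · exact ⟨b, h, Or.inl rfl⟩
    · exact ⟨a, ha, Or.inr hab⟩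
  · rintro ⟨a, ha, rfl | hab⟩
    · exact Or.inl ha
    · exact Or.inr ⟨a, ha, hab⟩

theorem asafDefeats_of_piStar {b : A} {X : A ⊕ B ⊕ C}
    (hb : asafDefeats sB tB sC tC S α (Sum.inl b)) (hbX : piStar sC tC S (Sum.inl b) X) :
    asafDefeats sB tB sC tC S α X := by
  obtain ⟨a, ha, hab⟩ := asafDefeats_inl_iff.1 hb
  exact Or.inr ⟨a, ha, Or.inl (Relation.TransGen.tail' hab hbX)⟩

theorem asafDef_of_piStar {b : A} {X : A ⊕ B ⊕ C}
    (hb : Sum.inl b ∈ asafDef sB tB sC tC S) (hbX : piStar sC tC S (Sum.inl b) X) :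
    X ∈ asafDef sB tB sC tC S := by
  obtain ⟨α, hαS, hα⟩ := hb
  exact ⟨α, hαS, asafDefeats_of_piStar hα hbX⟩

end

theorem asaf_def_closed_along_supports_general
    (sB : B → A) (tB : B → A ⊕ B ⊕ C) (sC : C → A) (tC : C → A ⊕ B ⊕ C)
    (S : Set (A ⊕ B ⊕ C)) :
    ∀ b c : A, Sum.inl b ∈ asafDef sB tB sC tC S →
      (∃ β : C, Sum.inr (Sum.inr β) ∈ S ∧ sC β = b ∧ tC β = Sum.inl c) →
      Sum.inl c ∈ asafDef sB tB sC tC S := by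
  rintro b c hb ⟨β, hβS, rfl, htβ⟩
  exact asafDef_of_piStar hb ⟨β, hβS, rfl, htβ.symm⟩

/-- In an ASAF, for any complete extension S, the defeated set is closed along
support edges in Π ∩ S: if argument b is defeated and (b,c) ∈ (Π∩S)*, then c is
defeated as well. -/
theorem asaf_def_closed_along_supports [Finite A] [Finite B] [Finite C]
    (sB : B → A) (tB : B → A ⊕ B ⊕ C) (sC : C → A) (tC : C → A ⊕ B ⊕ C)
    (hacyc : piAcyclic (B := B) sC tC) (S : Set (A ⊕ B ⊕ C))
    (hcf : S ∩ asafDef sB tB sC tC S = ∅) (hfix : S = asafAcc sB tB sC tC S) :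
    ∀ b c : A, Sum.inl b ∈ asafDef sB tB sC tC S →
      (∃ β : C, Sum.inr (Sum.inr β) ∈ S ∧ sC β = b ∧ tC β = Sum.inl c) →
      Sum.inl c ∈ asafDef sB tB sC tC S :=
  asaf_def_closed_along_supports_general sB tB sC tC S
end
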